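/- (Gradient of the group fairness discrepancy with respect to sample weights.) For each training index i, the partial derivative at ε = 0 of the group discrepancy ε ↦ (1/|J₀|)·Σ_{j∈J₀} F_j(θ(ε)) − (1/|J₁|)·Σ_{j'∈J₁} G_{j'}(θ(ε)) in the i-th coordinate equals ⟨ (1/|J₁|)·Σ_{j'∈J₁} ∇G_{j'}(θ*) − (1/|J₀|)·Σ_{j∈J₀} ∇F_j(θ*), H⁻¹(∇ℓ_i(θ*)) ⟩. -/

import Mathlib

/-!
Differentiating the reweighted first-order condition `∑ₖ (1/n + εₖ) • ∇ℓₖ(θ ε) = 0` in `εᵢ`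
at `ε = 0` gives `H (∂θ/∂εᵢ) + ∇ℓᵢ(θ*) = 0`, i.e. `∂θ/∂εᵢ = -H⁻¹ ∇ℓᵢ(θ*)`. By the chain rule the
derivative of the discrepancy is the inner product of its gradient at `θ*` with this vector.
-/

open InnerProductSpace

section Gradient

variable {E : Type*} [NormedAddCommGroup E] [InnerProductSpace ℝ E] [CompleteSpace E]

theorem HasGradientAt.sum {ι : Type*} {s : Finset ι} {f : ι → E → ℝ} {f' : ι → E} {x : E}
    (hf : ∀ k ∈ s, HasGradientAt (f k) (f' k) x) :
    HasGradientAt (fun w => ∑ k ∈ s, f k w) (∑ k ∈ s, f' k) x := by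
  rw [hasGradientAt_iff_hasFDerivAt, map_sum]
  exact HasFDerivAt.fun_sum fun k hk => (hf k hk).hasFDerivAt

theorem HasGradientAt.const_mul {f : E → ℝ} {f' x : E} (hf : HasGradientAt f f' x) (c : ℝ) :
    HasGradientAt (fun w => c * f w) (c • f') x := by
  rw [hasGradientAt_iff_hasFDerivAt, map_smul]
  exact hf.hasFDerivAt.const_mul c

theorem HasGradientAt.sub {f g : E → ℝ} {f' g' x : E} (hf : HasGradientAt f f' x)
    (hg : HasGradientAt g g' x) : HasGradientAt (fun w => f w - g w) (f' - g') x := by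
  rw [hasGradientAt_iff_hasFDerivAt, map_sub]
  exact hf.hasFDerivAt.sub hg.hasFDerivAt

theorem hasGradientAt_const_mul_sum {ι : Type*} [Fintype ι] {f : ι → E → ℝ} {x : E}
    (hf : ∀ k, DifferentiableAt ℝ (f k) x) (c : ℝ) :
    HasGradientAt (fun w => c * ∑ k, f k w) (c • ∑ k, gradient (f k) x) x :=
  (HasGradientAt.sum fun k _ => (hf k).hasGradientAt).const_mul c

theorem HasGradientAt.fderiv_comp_apply {V : Type*} [NormedAddCommGroup V] [NormedSpace ℝ V]
    {Φ : E → ℝ} {θ : V → E} {Φ' : E} {x : V} (hΦ : HasGradientAt Φ Φ' (θ x))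
    (hθ : DifferentiableAt ℝ θ x) (v : V) :
    fderiv ℝ (fun y => Φ (θ y)) x v = inner ℝ Φ' (fderiv ℝ θ x v) := by
  change fderiv ℝ (Φ ∘ θ) x v = _
  rw [(hΦ.hasFDerivAt.comp x hθ.hasFDerivAt).fderiv, ContinuousLinearMap.comp_apply,
    toDual_apply_apply]

theorem ContDiff.differentiable_gradient {f : E → ℝ} (hf : ContDiff ℝ 2 f) :
    Differentiable ℝ (gradient f) :=
  (toDual ℝ E).symm.toContinuousLinearEquiv.differentiable.comp
    ((hf.fderiv_right (by norm_num)).differentiable one_ne_zero)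

end Gradient

section ImplicitDifferentiation

variable {ι E F : Type*} [Fintype ι] [NormedAddCommGroup E] [NormedSpace ℝ E]
  [NormedAddCommGroup F] [NormedSpace ℝ F]
  {θ : (ι → ℝ) → E} {D : (ι → ℝ) →L[ℝ] E} {g : ι → E → F} {A : ι → E →L[ℝ] F}

theorem hasFDerivAt_sum_weight_add_smul (hθ : HasFDerivAt θ D 0)
    (hg : ∀ k, HasFDerivAt (g k) (A k) (θ 0)) (c : ι → ℝ) :
    HasFDerivAt (fun ε : ι → ℝ => ∑ k, (c k + ε k) • g k (θ ε))
      (∑ k, (c k • (A k).comp D + (ContinuousLinearMap.proj k).smulRight (g k (θ 0)))) 0 := by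
  refine HasFDerivAt.fun_sum fun k _ => ?_
  have hweight : HasFDerivAt (fun ε : ι → ℝ => c k + ε k) (ContinuousLinearMap.proj k) 0 :=
    (hasFDerivAt_apply (𝕜 := ℝ) (F' := fun _ => ℝ) k 0).const_add (c k)
  simpa only [Pi.zero_apply, add_zero, Function.comp_apply] using
    hweight.fun_smul ((hg k).comp 0 hθ)

theorem sum_smul_apply_single_add_eq_zero [DecidableEq ι] (hθ : HasFDerivAt θ D 0)
    (hg : ∀ k, HasFDerivAt (g k) (A k) (θ 0)) (c : ι → ℝ)
    (hcrit : ∀ᶠ ε in nhds (0 : ι → ℝ), ∑ k, (c k + ε k) • g k (θ ε) = 0) (i : ι) :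
    (∑ k, c k • A k) (D (Pi.single i 1)) + g i (θ 0) = 0 := by
  have hzero := (hasFDerivAt_sum_weight_add_smul hθ hg c).unique
    ((hasFDerivAt_const (0 : F) (0 : ι → ℝ)).congr_of_eventuallyEq hcrit)
  simpa [Finset.sum_add_distrib, Pi.single_apply] using
    congrArg (fun T : (ι → ℝ) →L[ℝ] F => T (Pi.single i 1)) hzero

end ImplicitDifferentiation

theorem fairness_discrepancy_gradient_general
    {E : Type*} [NormedAddCommGroup E] [InnerProductSpace ℝ E] [FiniteDimensional ℝ E]
    (n : ℕ) (ℓ : Fin n → E → ℝ) (hℓ : ∀ i, ContDiff ℝ 2 (ℓ i))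
    (θ : (Fin n → ℝ) → E) (θs : E) (hθ0 : θ 0 = θs) (hθ : DifferentiableAt ℝ θ 0)
    (H : E ≃L[ℝ] E)
    (hH : (H : E →L[ℝ] E) =
      fderiv ℝ (gradient (fun w => (1 / n : ℝ) * ∑ i, ℓ i w)) θs)
    (hcrit : ∀ᶠ ε in nhds (0 : Fin n → ℝ),
      ∑ i, ((1 / n : ℝ) + ε i) • gradient (ℓ i) (θ ε) = 0)
    (J0 J1 : Type*) [Fintype J0] [Fintype J1]
    (F : J0 → E → ℝ) (G : J1 → E → ℝ)
    (hF : ∀ j, DifferentiableAt ℝ (F j) θs) (hG : ∀ j', DifferentiableAt ℝ (G j') θs)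
    (i : Fin n) :
    fderiv ℝ
      (fun ε => (1 / (Fintype.card J0) : ℝ) * ∑ j, F j (θ ε)
        - (1 / (Fintype.card J1) : ℝ) * ∑ j', G j' (θ ε)) 0 (Pi.single i 1) =
      @inner ℝ E _
        ((1 / (Fintype.card J1) : ℝ) • ∑ j', gradient (G j') θs
          - (1 / (Fintype.card J0) : ℝ) • ∑ j, gradient (F j) θs)
        (H.symm (gradient (ℓ i) θs)) := by
  subst hθ0
  have hgrad := fun k => (hℓ k).differentiable_gradient
  have hHess : (H : E →L[ℝ] E) = ∑ k, (1 / n : ℝ) • fderiv ℝ (gradient (ℓ k)) (θ 0) := by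
    rw [hH, gradient_eq fun x => hasGradientAt_const_mul_sum
      (fun k => ((hℓ k).differentiable two_ne_zero).differentiableAt) (1 / n : ℝ),
      ← Finset.smul_sum]
    exact ((HasFDerivAt.fun_sum fun k _ => (hgrad k (θ 0)).hasFDerivAt).const_smul _).fderiv
  have hDθ : fderiv ℝ θ 0 (Pi.single i 1) = -H.symm (gradient (ℓ i) (θ 0)) := by
    rw [← map_neg, ContinuousLinearEquiv.eq_symm_apply, eq_neg_iff_add_eq_zero,
      ← ContinuousLinearEquiv.coe_coe, hHess]
    exact sum_smul_apply_single_add_eq_zero hθ.hasFDerivAt (fun k => (hgrad k (θ 0)).hasFDerivAt)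
      (fun _ => 1 / n) hcrit i
  have hdisc := (hasGradientAt_const_mul_sum hF (1 / Fintype.card J0 : ℝ)).sub
    (hasGradientAt_const_mul_sum hG (1 / Fintype.card J1 : ℝ))
  rw [hdisc.fderiv_comp_apply hθ, hDθ, inner_neg_right, ← inner_neg_left, neg_sub]

/-- gradient of the group fairness discrepancy w.r.t. sample weights:
under the multivariate influence-function setting, for each training index `i`, the
partial derivative at `ε = 0` of the group discrepancy
`ε ↦ (1/|J₀|)·Σ_{j∈J₀} F_j(θ(ε)) − (1/|J₁|)·Σ_{j'∈J₁} G_{j'}(θ(ε))`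
in the `i`-th coordinate equals
`⟨(1/|J₁|)·Σ_{j'} ∇G_{j'}(θ*) − (1/|J₀|)·Σ_j ∇F_j(θ*), H⁻¹(∇ℓᵢ(θ*))⟩`. -/
theorem fairness_discrepancy_gradient
    {E : Type*} [NormedAddCommGroup E] [InnerProductSpace ℝ E] [FiniteDimensional ℝ E]
    (n : ℕ) (hn : 1 ≤ n) (ℓ : Fin n → E → ℝ) (hℓ : ∀ i, ContDiff ℝ 2 (ℓ i))
    (θ : (Fin n → ℝ) → E) (θs : E) (hθ0 : θ 0 = θs) (hθ : DifferentiableAt ℝ θ 0)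
    (H : E ≃L[ℝ] E)
    (hH : (H : E →L[ℝ] E) =
      fderiv ℝ (gradient (fun w => (1 / n : ℝ) * ∑ i, ℓ i w)) θs)
    (hcrit : ∀ᶠ ε in nhds (0 : Fin n → ℝ),
      ∑ i, ((1 / n : ℝ) + ε i) • gradient (ℓ i) (θ ε) = 0)
    (J0 J1 : Type*) [Fintype J0] [Fintype J1] [Nonempty J0] [Nonempty J1]
    (F : J0 → E → ℝ) (G : J1 → E → ℝ)
    (hF : ∀ j, DifferentiableAt ℝ (F j) θs) (hG : ∀ j', DifferentiableAt ℝ (G j') θs)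
    (i : Fin n) :
    fderiv ℝ
      (fun ε => (1 / (Fintype.card J0) : ℝ) * ∑ j, F j (θ ε)
        - (1 / (Fintype.card J1) : ℝ) * ∑ j', G j' (θ ε)) 0 (Pi.single i 1) =
      @inner ℝ E _
        ((1 / (Fintype.card J1) : ℝ) • ∑ j', gradient (G j') θs
          - (1 / (Fintype.card J0) : ℝ) • ∑ j, gradient (F j) θs)
        (H.symm (gradient (ℓ i) θs)) :=
  fairness_discrepancy_gradient_general n ℓ hℓ θ θs hθ0 hθ H hH hcrit J0 J1 F G hF hG i
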